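/- arXiv:0904.2562 — 2 statements merged into one kernel-verified Lean document; each statement's English description precedes it below -/
import Mathlib

section
/- Suppose k is even, (I,J) is an ordered pair of disjoint subsets of {1,…,n} with |I|+|J| = k that is self-dual, and t_{(I,J)} = k/2. Then 𝕚 = 𝕛 = k/2, J = {i_1 + 1, …, i_{k/2} + 1} (i.e. j_l = i_l + 1 for 1 ≤ l ≤ k/2), and λ_{i_l} = λ_{i_l + 1} for 1 ≤ l ≤ k/2. -/
noncomputable section

open Finset

/-- The `i`-th standard basis vector `ε_i` of `ℝ^n` (0-indexed: `eps n i` is `ε_{i+1}`). -/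
def eps (n : ℕ) (i : Fin n) : Fin n → ℝ := fun m => if m = i then 1 else 0

/-- The positive roots of type `B_n`: `ε_i - ε_j` and `ε_i + ε_j` for `i < j`, and all `ε_i`. -/
def PosRoot (n : ℕ) : Set (Fin n → ℝ) :=
  {v | (∃ i j : Fin n, i < j ∧ (v = eps n i - eps n j ∨ v = eps n i + eps n j)) ∨
       (∃ i : Fin n, v = eps n i)}

/-- The negative roots of type `B_n`. -/
def NegRoot (n : ℕ) : Set (Fin n → ℝ) := {v | -v ∈ PosRoot n}

/-- The simple roots: `simpleRoot n l` is `α_{l+1}`, i.e. `ε_{l+1} - ε_{l+2}` if `l+1 < n`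
and `ε_n` for the last one. -/
def simpleRoot (n : ℕ) (l : Fin n) : Fin n → ℝ :=
  if h : (l : ℕ) + 1 < n then eps n l - eps n ⟨(l : ℕ) + 1, h⟩ else eps n l

/-- The number of elements of `S` smaller than `x` (the 0-based rank of `x` in `S`). -/
def rk {n : ℕ} (S : Finset (Fin n)) (x : Fin n) : ℕ := (S.filter (fun y => y < x)).card

/-- The `l`-th element (0-indexed) of `S` in increasing order. -/
def elt {n : ℕ} (S : Finset (Fin n)) (l : ℕ) (h : l < S.card) : Fin n :=
  (S.orderIsoOfFin rfl ⟨l, h⟩).1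

/-- The sign `η_x` attached to the pair `(I, J)`: `-1` on `I` and `1` elsewhere. -/
def sgn {n : ℕ} (I : Finset (Fin n)) (x : Fin n) : ℝ := if x ∈ I then -1 else 1

/-- The 0-based index of the coordinate to which `w_{(I,J)}` sends the `x`-th coordinate:
`i_l ↦ k+1-l`, `j_l ↦ l`, `r_l ↦ k+l` (in the 1-based numbering of the paper). -/
def tgt {n : ℕ} (k : ℕ) (I J : Finset (Fin n)) (x : Fin n) : ℕ :=
  if x ∈ I then k - 1 - rk I x
  else if x ∈ J then rk J x
  else k + rk ((I ∪ J)ᶜ) x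

/-- The Kostant representative `w_{(I,J)}` as a linear map on `ℝ^n`, determined by
`w(ε_{i_l}) = -ε_{k+1-l}`, `w(ε_{j_l}) = ε_l`, `w(ε_{r_l}) = ε_{k+l}`. -/
def wIJ {n : ℕ} (k : ℕ) (I J : Finset (Fin n)) (v : Fin n → ℝ) : Fin n → ℝ :=
  fun m => ∑ x : Fin n, (if tgt k I J x = (m : ℕ) then sgn I x * v x else 0)

/-- The inverse of `w_{(I,J)}`. -/
def wIJinv {n : ℕ} (k : ℕ) (I J : Finset (Fin n)) (v : Fin n → ℝ) : Fin n → ℝ :=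
  fun x => sgn I x * ∑ m : Fin n, (if tgt k I J x = (m : ℕ) then v m else 0)

/-- The Weyl group of type `B_n`, realized as the group of linear automorphisms permuting
the basis vectors up to signs. -/
def WeylB (n : ℕ) : Set ((Fin n → ℝ) ≃ₗ[ℝ] (Fin n → ℝ)) :=
  {w | ∃ (σ : Equiv.Perm (Fin n)) (η : Fin n → ℝ),
    (∀ i, η i = 1 ∨ η i = -1) ∧ ∀ i, w (eps n i) = η i • eps n (σ i)}

/-- The set `W^{P_k}` of Kostant representatives: `w ∈ W` such that `w⁻¹(α_l)` is a
positive root for all `l ≠ k` (1-based `l`). -/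
def WP (n k : ℕ) : Set ((Fin n → ℝ) ≃ₗ[ℝ] (Fin n → ℝ)) :=
  {w | w ∈ WeylB n ∧ ∀ l : Fin n, (l : ℕ) + 1 ≠ k → w.symm (simpleRoot n l) ∈ PosRoot n}

/-- The length of `w`: the number of positive roots mapped by `w` to negative roots. -/
def len {n : ℕ} (w : (Fin n → ℝ) → (Fin n → ℝ)) : ℕ :=
  Set.ncard {β | β ∈ PosRoot n ∧ w β ∈ NegRoot n}

/-- `m = max({l ∈ {1,…,𝕛} : j_l < i for all i ∈ I} ∪ {0})`. -/
def mIJ {n : ℕ} (I J : Finset (Fin n)) : ℕ :=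
  (insert 0 ((Finset.Icc 1 J.card).filter
    (fun l => ∃ x ∈ J, rk J x + 1 = l ∧ ∀ i ∈ I, x < i))).max' (insert_nonempty _ _)

/-- `ρ = Σ_i (n - i + 1/2) ε_i` (1-based `i`). -/
def rho (n : ℕ) : Fin n → ℝ := fun i => (n : ℝ) - ((i : ℕ) + 1) + 1 / 2

/-- The vector `λ + ρ` in `ℝ^n`. -/
def lamRho (n : ℕ) (lam : Fin n → ℤ) : Fin n → ℝ := fun i => (lam i : ℝ) + rho n i

/-- `t_{(I,J)} = Σ_l (λ_{i_l} - i_l) - Σ_l (λ_{j_l} - j_l) + (𝕚 - 𝕛)(n + 1/2)`. -/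
def tIJ {n : ℕ} (lam : Fin n → ℤ) (I J : Finset (Fin n)) : ℝ :=
  (∑ l : Fin I.card,
    ((lam (elt I (l : ℕ) l.isLt) : ℝ) - (((elt I (l : ℕ) l.isLt : Fin n) : ℕ) + 1)))
  - (∑ l : Fin J.card,
    ((lam (elt J (l : ℕ) l.isLt) : ℝ) - (((elt J (l : ℕ) l.isLt : Fin n) : ℕ) + 1)))
  + ((I.card : ℝ) - (J.card : ℝ)) * ((n : ℝ) + 1 / 2)

/-- `c`: the arithmetic mean of the first `k` coordinates of `w_{(I,J)}(λ+ρ) - ρ`. -/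
def cIJ {n : ℕ} (k : ℕ) (lam : Fin n → ℤ) (I J : Finset (Fin n)) : ℝ :=
  (∑ m ∈ Finset.univ.filter (fun m : Fin n => (m : ℕ) < k),
    (wIJ k I J (lamRho n lam) m - rho n m)) / (k : ℝ)

/-- `μ_{(I,J)} = w_{(I,J)}(λ+ρ) - ρ - c·(ε_1 + … + ε_k)`. -/
def muIJ {n : ℕ} (k : ℕ) (lam : Fin n → ℤ) (I J : Finset (Fin n)) : Fin n → ℝ :=
  fun m => wIJ k I J (lamRho n lam) m - rho n m -
    cIJ k lam I J * (∑ i ∈ Finset.univ.filter (fun i : Fin n => (i : ℕ) < k), eps n i) m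

/-- `(I,J)` is self-dual: the `l`-th coordinate of `μ_{(I,J)}` is the negative of its
`(k+1-l)`-th coordinate for all `1 ≤ l ≤ k`. -/
def SelfDual {n : ℕ} (k : ℕ) (lam : Fin n → ℤ) (I J : Finset (Fin n)) : Prop :=
  ∀ (l : ℕ) (_ : 1 ≤ l) (_ : l ≤ k) (h1 : l - 1 < n) (h2 : k - l < n),
    muIJ k lam I J ⟨l - 1, h1⟩ = - muIJ k lam I J ⟨k - l, h2⟩

/-- The set `𝒮_k` of ordered pairs `(I,J)` of disjoint subsets with `|I| + |J| = k`. -/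
def SIJ (n k : ℕ) : Set (Finset (Fin n) × Finset (Fin n)) :=
  {p | Disjoint p.1 p.2 ∧ p.1.card + p.2.card = k}

lemma elt_mem {n : ℕ} (S : Finset (Fin n)) (l : ℕ) (h : l < S.card) : elt S l h ∈ S :=
  (S.orderIsoOfFin rfl ⟨l, h⟩).2

lemma rk_lt_card {n : ℕ} {S : Finset (Fin n)} {x : Fin n} (hx : x ∈ S) : rk S x < S.card :=
  Finset.card_lt_card (Finset.filter_ssubset.mpr ⟨x, hx, lt_irrefl x⟩)

lemma rk_lt_rk {n : ℕ} {S : Finset (Fin n)} {x y : Fin n} (hx : x ∈ S) (hxy : x < y) :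
    rk S x < rk S y := by
  apply Finset.card_lt_card
  rw [Finset.ssubset_iff_of_subset (Finset.monotone_filter_right S (fun a _ h => lt_trans h hxy))]
  exact ⟨x, Finset.mem_filter.mpr ⟨hx, hxy⟩, by simp⟩

lemma rk_inj {n : ℕ} {S : Finset (Fin n)} {x y : Fin n} (hx : x ∈ S) (hy : y ∈ S)
    (h : rk S x = rk S y) : x = y := by
  rcases lt_trichotomy x y with h' | h' | h'
  · exact absurd h (Nat.ne_of_lt (rk_lt_rk hx h'))
  · exact h'
  · exact absurd h.symm (Nat.ne_of_lt (rk_lt_rk hy h'))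

lemma elt_lt_elt {n : ℕ} {S : Finset (Fin n)} {a b : ℕ} (ha : a < S.card) (hb : b < S.card)
    (hab : a < b) : elt S a ha < elt S b hb :=
  Subtype.coe_lt_coe.mpr ((S.orderIsoOfFin rfl).lt_iff_lt.mpr
    (show (⟨a, ha⟩ : Fin S.card) < ⟨b, hb⟩ from hab))

lemma rk_elt {n : ℕ} {S : Finset (Fin n)} {l : ℕ} (h : l < S.card) :
    rk S (elt S l h) = l := by
  classical
  have key : (S.filter (fun y => y < elt S l h)).card
      = ((Finset.univ : Finset (Fin S.card)).filter (fun m => m < ⟨l, h⟩)).card := by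
    apply Finset.card_bij'
      (i := fun y hy => (S.orderIsoOfFin rfl).symm ⟨y, (Finset.mem_filter.mp hy).1⟩)
      (j := fun m _ => (S.orderIsoOfFin rfl m).1)
    case hi =>
      intro y hy
      simp only [Finset.mem_filter, Finset.mem_univ, true_and]
      rw [← OrderIso.lt_iff_lt (S.orderIsoOfFin rfl), OrderIso.apply_symm_apply]
      exact Subtype.coe_lt_coe.mp (Finset.mem_filter.mp hy).2
    case hj =>
      intro m hm
      simp only [Finset.mem_filter, Finset.mem_univ, true_and] at hm ⊢
      exact ⟨(S.orderIsoOfFin rfl m).2,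
        Subtype.coe_lt_coe.mpr ((S.orderIsoOfFin rfl).lt_iff_lt.mpr hm)⟩
    case left_inv => intro y hy; simp
    case right_inv => intro m hm; exact (S.orderIsoOfFin rfl).symm_apply_apply m
  have key2 : ((Finset.univ : Finset (Fin S.card)).filter (fun m => m < ⟨l, h⟩))
      = Finset.Iio ⟨l, h⟩ := by ext m; simp
  rw [rk, key, key2, Fin.card_Iio]

lemma elt_rk {n : ℕ} {S : Finset (Fin n)} {x : Fin n} (hx : x ∈ S) :
    elt S (rk S x) (rk_lt_card hx) = x :=
  rk_inj (elt_mem _ _ _) hx (rk_elt (rk_lt_card hx))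

lemma wIJ_apply_J {n k : ℕ} {I J : Finset (Fin n)} (hdisj : Disjoint I J)
    (hcard : I.card + J.card = k) {j : Fin n} (hj : j ∈ J) {m : Fin n}
    (hm : (m : ℕ) = rk J j) (v : Fin n → ℝ) : wIJ k I J v m = v j := by
  have hjI : j ∉ I := fun h => (Finset.disjoint_left.mp hdisj h) hj
  have hjJ := rk_lt_card hj
  unfold wIJ
  have h0 : ∀ x ∈ Finset.univ, x ≠ j →
      (if tgt k I J x = (m : ℕ) then sgn I x * v x else 0) = 0 := by
    intro x _ hxj
    rw [if_neg]
    intro htgt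
    rw [hm] at htgt
    unfold tgt at htgt
    by_cases hxI : x ∈ I
    · rw [if_pos hxI] at htgt
      have := rk_lt_card hxI
      omega
    · by_cases hxJ : x ∈ J
      · rw [if_neg hxI, if_pos hxJ] at htgt
        exact hxj (rk_inj hxJ hj htgt)
      · rw [if_neg hxI, if_neg hxJ] at htgt
        omega
  rw [Finset.sum_eq_single j h0 (fun h => absurd (Finset.mem_univ j) h)]
  rw [if_pos, sgn, if_neg hjI, one_mul]
  rw [tgt, if_neg hjI, if_pos hj, hm]

lemma wIJ_apply_I {n k : ℕ} {I J : Finset (Fin n)} (hdisj : Disjoint I J)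
    (hcard : I.card + J.card = k) {i : Fin n} (hi : i ∈ I) {m : Fin n}
    (hm : (m : ℕ) = k - 1 - rk I i) (v : Fin n → ℝ) : wIJ k I J v m = -v i := by
  have hiJ : i ∉ J := fun h => (Finset.disjoint_left.mp hdisj hi) h
  have hiI := rk_lt_card hi
  unfold wIJ
  have h0 : ∀ x ∈ Finset.univ, x ≠ i →
      (if tgt k I J x = (m : ℕ) then sgn I x * v x else 0) = 0 := by
    intro x _ hxi
    rw [if_neg]
    intro htgt
    rw [hm] at htgt
    unfold tgt at htgt
    by_cases hxI : x ∈ I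
    · rw [if_pos hxI] at htgt
      have := rk_lt_card hxI
      exact hxi (rk_inj hxI hi (by omega))
    · by_cases hxJ : x ∈ J
      · rw [if_neg hxI, if_pos hxJ] at htgt
        have := rk_lt_card hxJ
        omega
      · rw [if_neg hxI, if_neg hxJ] at htgt
        omega
  rw [Finset.sum_eq_single i h0 (fun h => absurd (Finset.mem_univ i) h)]
  rw [if_pos, sgn, if_pos hi, neg_one_mul]
  rw [tgt, if_pos hi, hm]

lemma wIJ_sum {n k : ℕ} {I J : Finset (Fin n)} (hdisj : Disjoint I J)
    (hcard : I.card + J.card = k) (hkn : k ≤ n) (v : Fin n → ℝ) :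
    ∑ m ∈ Finset.univ.filter (fun m : Fin n => (m : ℕ) < k), wIJ k I J v m
      = ∑ x ∈ J, v x - ∑ x ∈ I, v x := by
  unfold wIJ
  rw [Finset.sum_comm]
  have htgtlt : ∀ x : Fin n, (tgt k I J x < k ↔ x ∈ I ∪ J) := by
    intro x
    unfold tgt
    by_cases hxI : x ∈ I
    · have h1 := rk_lt_card hxI
      simp only [if_pos hxI, Finset.mem_union]
      exact ⟨fun _ => Or.inl hxI, fun _ => by omega⟩
    · by_cases hxJ : x ∈ J
      · have h1 := rk_lt_card hxJ
        simp only [if_neg hxI, if_pos hxJ, Finset.mem_union]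
        exact ⟨fun _ => Or.inr hxJ, fun _ => by omega⟩
      · simp only [if_neg hxI, if_neg hxJ, Finset.mem_union]
        exact ⟨fun h => by omega, fun h => by tauto⟩
  have step : ∀ x : Fin n,
      (∑ m ∈ Finset.univ.filter (fun m : Fin n => (m : ℕ) < k),
        if tgt k I J x = (m : ℕ) then sgn I x * v x else 0)
      = if x ∈ I ∪ J then sgn I x * v x else 0 := by
    intro x
    by_cases hx : x ∈ I ∪ J
    · rw [if_pos hx]
      have hlt : tgt k I J x < k := (htgtlt x).mpr hx
      have h0 : ∀ m ∈ Finset.univ.filter (fun m : Fin n => (m : ℕ) < k),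
          m ≠ (⟨tgt k I J x, lt_of_lt_of_le hlt hkn⟩ : Fin n) →
          (if tgt k I J x = (m : ℕ) then sgn I x * v x else 0) = 0 := by
        intro m _ hne
        exact if_neg (fun h => hne (Fin.ext h.symm))
      have hmem : (⟨tgt k I J x, lt_of_lt_of_le hlt hkn⟩ : Fin n)
          ∈ Finset.univ.filter (fun m : Fin n => (m : ℕ) < k) := by
        simp only [Finset.mem_filter, Finset.mem_univ, true_and]
        exact hlt
      rw [Finset.sum_eq_single (⟨tgt k I J x, lt_of_lt_of_le hlt hkn⟩ : Fin n) h0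
        (fun h => absurd hmem h)]
      simp
    · rw [if_neg hx]
      apply Finset.sum_eq_zero
      intro m hmem
      apply if_neg
      intro h
      have hmk : (m : ℕ) < k := (Finset.mem_filter.mp hmem).2
      rw [← h] at hmk
      exact hx ((htgtlt x).mp hmk)
  rw [Finset.sum_congr rfl (fun x _ => step x), Finset.sum_ite_mem, Finset.univ_inter,
    Finset.sum_union hdisj]
  have h1 : ∑ x ∈ I, sgn I x * v x = -∑ x ∈ I, v x := by
    rw [← Finset.sum_neg_distrib]
    exact Finset.sum_congr rfl (fun x hx => by rw [sgn, if_pos hx, neg_one_mul])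
  have h2 : ∑ x ∈ J, sgn I x * v x = ∑ x ∈ J, v x := by
    refine Finset.sum_congr rfl (fun x hx => ?_)
    have : x ∉ I := fun h => (Finset.disjoint_left.mp hdisj h) hx
    rw [sgn, if_neg this, one_mul]
  rw [h1, h2]
  ring

lemma sum_elt {n : ℕ} (S : Finset (Fin n)) (f : Fin n → ℝ) :
    ∑ l : Fin S.card, f (elt S (l : ℕ) l.isLt) = ∑ x ∈ S, f x := by
  apply Finset.sum_bij (fun (l : Fin S.card) _ => elt S (l : ℕ) l.isLt)
  · intro l _
    exact elt_mem S l l.isLt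
  · intro a _ b _ hab
    apply Fin.ext
    rw [← rk_elt a.isLt, ← rk_elt b.isLt]
    exact congrArg (rk S) hab
  · intro x hx
    exact ⟨⟨rk S x, rk_lt_card hx⟩, Finset.mem_univ _, elt_rk hx⟩
  · intro l _
    rfl

lemma sum_range_aux (nr : ℝ) : ∀ k : ℕ,
    ∑ i ∈ Finset.range k, (nr - ((i : ℝ) + 1) + 1 / 2) = k * nr - k ^ 2 / 2
  | 0 => by simp
  | (k + 1) => by
      rw [Finset.sum_range_succ, sum_range_aux nr k]
      push_cast
      ring

lemma rho_sum {n k : ℕ} (hkn : k ≤ n) :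
    ∑ m ∈ Finset.univ.filter (fun m : Fin n => (m : ℕ) < k), rho n m
      = k * n - (k : ℝ) ^ 2 / 2 := by
  rw [Finset.sum_filter]
  simp only [rho]
  rw [Fin.sum_univ_eq_sum_range
    (fun i : ℕ => if i < k then ((n : ℝ) - ((i : ℝ) + 1) + 1 / 2) else 0) n]
  rw [← Finset.sum_subset (Finset.range_subset_range.mpr hkn)
    (fun i _ hik => by rw [if_neg (fun h => hik (Finset.mem_range.mpr h))])]
  rw [Finset.sum_congr rfl (fun i hi => if_pos (Finset.mem_range.mp hi))]
  exact sum_range_aux n k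

lemma tIJ_eval {n : ℕ} (lam : Fin n → ℤ) (I J : Finset (Fin n)) :
    tIJ lam I J = ∑ x ∈ I, lamRho n lam x - ∑ x ∈ J, lamRho n lam x := by
  have key : ∀ S : Finset (Fin n),
      ∑ x ∈ S, lamRho n lam x
        = (∑ l : Fin S.card,
            ((lam (elt S (l : ℕ) l.isLt) : ℝ) - (((elt S (l : ℕ) l.isLt : Fin n) : ℕ) + 1)))
          + S.card * ((n : ℝ) + 1 / 2) := by
    intro S
    rw [← sum_elt S (lamRho n lam)]
    have h1 : ∀ l : Fin S.card, lamRho n lam (elt S (l : ℕ) l.isLt)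
        = ((lam (elt S (l : ℕ) l.isLt) : ℝ) - (((elt S (l : ℕ) l.isLt : Fin n) : ℕ) + 1))
          + ((n : ℝ) + 1 / 2) := by
      intro l
      unfold lamRho rho
      ring
    rw [Finset.sum_congr rfl (fun l _ => h1 l), Finset.sum_add_distrib, Finset.sum_const,
      Finset.card_univ, Fintype.card_fin, nsmul_eq_mul]
  rw [key I, key J]
  unfold tIJ
  ring

lemma cIJ_eval {n k : ℕ} {I J : Finset (Fin n)} (hdisj : Disjoint I J)
    (hcard : I.card + J.card = k) (hk1 : 1 ≤ k) (hkn : k ≤ n)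
    (lam : Fin n → ℤ) (ht : tIJ lam I J = (k : ℝ) / 2) :
    cIJ k lam I J = (k : ℝ) / 2 - 1 / 2 - n := by
  have hk0 : (k : ℝ) ≠ 0 := Nat.cast_ne_zero.mpr (by omega)
  have h := tIJ_eval lam I J
  rw [ht] at h
  unfold cIJ
  rw [Finset.sum_sub_distrib, wIJ_sum hdisj hcard hkn, rho_sum hkn, div_eq_iff hk0]
  linear_combination h

/-- the structure of self-dual pairs with `t_{(I,J)} = k/2`, for even `k`. -/
theorem selfDual_t_half_k_even
    (n k : ℕ) (hn : 3 ≤ n) (hk1 : 1 ≤ k) (hkn : k ≤ n) (heven : Even k)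
    (lam : Fin n → ℤ) (hdom : ∀ i j : Fin n, i ≤ j → lam j ≤ lam i) (hnn : ∀ i, 0 ≤ lam i)
    (I J : Finset (Fin n)) (hdisj : Disjoint I J) (hcard : I.card + J.card = k)
    (hsd : SelfDual k lam I J) (ht : tIJ lam I J = (k : ℝ) / 2) :
    I.card = k / 2 ∧
    J.card = k / 2 ∧
    (∀ (l : ℕ) (hJ : l < J.card) (hI : l < I.card),
      ((elt J l hJ : Fin n) : ℕ) = ((elt I l hI : Fin n) : ℕ) + 1) ∧
    (∀ (l : ℕ) (hI : l < I.card) (_ : l + 1 ≤ k / 2)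
        (hb : ((elt I l hI : Fin n) : ℕ) + 1 < n),
      lam (elt I l hI) = lam ⟨((elt I l hI : Fin n) : ℕ) + 1, hb⟩) := by
  classical
  have hval_half : ∀ x : Fin n, (1 : ℝ) / 2 ≤ lamRho n lam x := by
    intro x
    have h1 : (0 : ℝ) ≤ (lam x : ℝ) := by exact_mod_cast hnn x
    have h2 : ((x : ℕ) : ℝ) + 1 ≤ (n : ℝ) := by exact_mod_cast x.isLt
    unfold lamRho rho
    linarith
  have hval_dec : ∀ x y : Fin n, x ≤ y →
      lamRho n lam y + (((y : ℕ) : ℝ) - ((x : ℕ) : ℝ)) ≤ lamRho n lam x := by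
    intro x y hxy
    have h1 : (lam y : ℝ) ≤ (lam x : ℝ) := by exact_mod_cast hdom x y hxy
    unfold lamRho rho
    linarith
  have hc : cIJ k lam I J = (k : ℝ) / 2 - 1 / 2 - n := cIJ_eval hdisj hcard hk1 hkn lam ht
  have epsum : ∀ m : Fin n, (m : ℕ) < k →
      (∑ i ∈ Finset.univ.filter (fun i : Fin n => (i : ℕ) < k), eps n i) m = 1 := by
    intro m hm
    rw [Finset.sum_apply]
    simp only [eps]
    rw [Finset.sum_ite_eq]
    simp [hm]
  have key : ∀ l : ℕ, 1 ≤ l → l ≤ k → ∀ (h1 : l - 1 < n) (h2 : k - l < n),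
      wIJ k I J (lamRho n lam) ⟨l - 1, h1⟩ + wIJ k I J (lamRho n lam) ⟨k - l, h2⟩ = -1 := by
    intro l hl1 hlk h1 h2
    have hsd' := hsd l hl1 hlk h1 h2
    simp only [muIJ] at hsd'
    rw [epsum ⟨l - 1, h1⟩ (show l - 1 < k by omega),
      epsum ⟨k - l, h2⟩ (show k - l < k by omega), hc] at hsd'
    unfold rho at hsd'
    have c1 : (((⟨l - 1, h1⟩ : Fin n) : ℕ) : ℝ) = (l : ℝ) - 1 := by
      show ((l - 1 : ℕ) : ℝ) = (l : ℝ) - 1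
      rw [Nat.cast_sub hl1]
      norm_num
    have c2 : (((⟨k - l, h2⟩ : Fin n) : ℕ) : ℝ) = (k : ℝ) - (l : ℝ) := by
      show ((k - l : ℕ) : ℝ) = (k : ℝ) - (l : ℝ)
      rw [Nat.cast_sub hlk]
    linarith [hsd', c1, c2]
  obtain ⟨r, hr⟩ := heven
  have hcards : I.card = J.card := by
    by_contra hne
    rcases Nat.lt_or_ge I.card J.card with hlt | hge
    · have h1 : I.card + 1 - 1 < n := by omega
      have h2 : k - (I.card + 1) < n := by omega
      have e := key (I.card + 1) (by omega) (by omega) h1 h2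
      have hjj : J.card - 1 < J.card := by omega
      have w1 : wIJ k I J (lamRho n lam) ⟨I.card + 1 - 1, h1⟩
          = lamRho n lam (elt J I.card hlt) :=
        wIJ_apply_J hdisj hcard (elt_mem _ _ _) (by show I.card + 1 - 1 = _; rw [rk_elt]; omega) _
      have w2 : wIJ k I J (lamRho n lam) ⟨k - (I.card + 1), h2⟩
          = lamRho n lam (elt J (J.card - 1) hjj) :=
        wIJ_apply_J hdisj hcard (elt_mem _ _ _)
          (by show k - (I.card + 1) = _; rw [rk_elt]; omega) _
      rw [w1, w2] at e
      have ha := hval_half (elt J I.card hlt)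
      have hb := hval_half (elt J (J.card - 1) hjj)
      linarith
    · have hgt2 : J.card + 2 ≤ I.card := by omega
      have h1 : J.card + 1 - 1 < n := by omega
      have h2 : k - (J.card + 1) < n := by omega
      have e := key (J.card + 1) (by omega) (by omega) h1 h2
      have hi1 : I.card - 1 < I.card := by omega
      have hi2 : J.card < I.card := by omega
      have w1 : wIJ k I J (lamRho n lam) ⟨J.card + 1 - 1, h1⟩
          = -lamRho n lam (elt I (I.card - 1) hi1) :=
        wIJ_apply_I hdisj hcard (elt_mem _ _ _)
          (by show J.card + 1 - 1 = _; rw [rk_elt]; omega) _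
      have w2 : wIJ k I J (lamRho n lam) ⟨k - (J.card + 1), h2⟩
          = -lamRho n lam (elt I J.card hi2) :=
        wIJ_apply_I hdisj hcard (elt_mem _ _ _)
          (by show k - (J.card + 1) = _; rw [rk_elt]; omega) _
      rw [w1, w2] at e
      have hlt' : elt I J.card hi2 < elt I (I.card - 1) hi1 := elt_lt_elt hi2 hi1 (by omega)
      have hd := hval_dec _ _ (le_of_lt hlt')
      have hnat : ((elt I J.card hi2 : Fin n) : ℕ) + 1
          ≤ ((elt I (I.card - 1) hi1 : Fin n) : ℕ) := hlt'
      have hnat' : (((elt I J.card hi2 : Fin n) : ℕ) : ℝ) + 1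
          ≤ (((elt I (I.card - 1) hi1 : Fin n) : ℕ) : ℝ) := by exact_mod_cast hnat
      have hb := hval_half (elt I (I.card - 1) hi1)
      linarith
  have main : ∀ (l : ℕ) (hJl : l < J.card) (hIl : l < I.card),
      ((elt J l hJl : Fin n) : ℕ) = ((elt I l hIl : Fin n) : ℕ) + 1 ∧
      lam (elt I l hIl) = lam (elt J l hJl) := by
    intro l hJl hIl
    have h1 : l + 1 - 1 < n := by omega
    have h2 : k - (l + 1) < n := by omega
    have e := key (l + 1) (by omega) (by omega) h1 h2
    have w1 : wIJ k I J (lamRho n lam) ⟨l + 1 - 1, h1⟩ = lamRho n lam (elt J l hJl) :=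
      wIJ_apply_J hdisj hcard (elt_mem _ _ _) (by show l + 1 - 1 = _; rw [rk_elt]; omega) _
    have w2 : wIJ k I J (lamRho n lam) ⟨k - (l + 1), h2⟩ = -lamRho n lam (elt I l hIl) :=
      wIJ_apply_I hdisj hcard (elt_mem _ _ _)
        (by show k - (l + 1) = _; rw [rk_elt]; omega) _
    rw [w1, w2] at e
    have hiI := elt_mem I l hIl
    have hjJ := elt_mem J l hJl
    have hne : elt I l hIl ≠ elt J l hJl :=
      fun h => (Finset.disjoint_left.mp hdisj hiI) (h ▸ hjJ)
    have hij : elt I l hIl < elt J l hJl := by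
      rcases lt_or_gt_of_ne hne with h | h
      · exact h
      · exfalso
        have hd := hval_dec _ _ (le_of_lt h)
        have hnat : ((elt J l hJl : Fin n) : ℕ) + 1 ≤ ((elt I l hIl : Fin n) : ℕ) := h
        have hnat' : (((elt J l hJl : Fin n) : ℕ) : ℝ) + 1
            ≤ (((elt I l hIl : Fin n) : ℕ) : ℝ) := by exact_mod_cast hnat
        linarith
    have hd := hval_dec _ _ (le_of_lt hij)
    have hnat1 : ((elt I l hIl : Fin n) : ℕ) + 1 ≤ ((elt J l hJl : Fin n) : ℕ) := hij
    have hnat1' : (((elt I l hIl : Fin n) : ℕ) : ℝ) + 1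
        ≤ (((elt J l hJl : Fin n) : ℕ) : ℝ) := by exact_mod_cast hnat1
    have hnat2' : (((elt J l hJl : Fin n) : ℕ) : ℝ)
        ≤ (((elt I l hIl : Fin n) : ℕ) : ℝ) + 1 := by linarith
    have hvaleq : ((elt J l hJl : Fin n) : ℕ) = ((elt I l hIl : Fin n) : ℕ) + 1 := by
      have := le_antisymm hnat2' hnat1'
      exact_mod_cast this
    refine ⟨hvaleq, ?_⟩
    have hlamr : (lam (elt I l hIl) : ℝ) = (lam (elt J l hJl) : ℝ) := by
      have e2 : lamRho n lam (elt I l hIl) = lamRho n lam (elt J l hJl) + 1 := by linarith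
      have hv' : (((elt J l hJl : Fin n) : ℕ) : ℝ)
          = (((elt I l hIl : Fin n) : ℕ) : ℝ) + 1 := by exact_mod_cast hvaleq
      unfold lamRho rho at e2
      linarith
    exact_mod_cast hlamr
  refine ⟨by omega, by omega, ?_, ?_⟩
  · intro l hJ hI
    exact (main l hJ hI).1
  · intro l hI hhalf hb
    have hJ : l < J.card := by omega
    obtain ⟨h1, h2⟩ := main l hJ hI
    have h3 : elt J l hJ = ⟨((elt I l hI : Fin n) : ℕ) + 1, hb⟩ := Fin.ext h1
    rw [h2, h3]

end
end

section
/- For every real number q with (1/2)(k(k−1)/2 + ⌊k/2⌋ + l² + l) ≤ q ≤ (1/2)((k−1)(k+4)/2 − ⌊k/2⌋ + l² + l), one has (n² + n)/2 − ⌈k/2⌉ ≤ q + D − L ≤ (n² + n)/2 − 1. -/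
noncomputable section

open Finset

/-- degree bounds for residual classes at `s = 1/2`.
Here `l = n - k`, `D = k(2n-k) - k(k-1)/2 = dim N_k`, and `L = ℓ(w)` is
`((k-1)/2)(2n - 3(k-1)/2) + (n-k+1)` for odd `k` and `(k/2)(2n - 3k/2 + 1)` for even `k`. -/
theorem degree_bounds_residual_half
    (n k : ℕ) (hn : 3 ≤ n) (hk1 : 1 ≤ k) (hkn : k ≤ n) :
    ∀ q : ℝ,
      1 / 2 * ((k : ℝ) * ((k : ℝ) - 1) / 2 + (⌊(k : ℝ) / 2⌋ : ℤ)
          + ((n : ℝ) - k) ^ 2 + ((n : ℝ) - k)) ≤ q →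
      q ≤ 1 / 2 * (((k : ℝ) - 1) * ((k : ℝ) + 4) / 2 - (⌊(k : ℝ) / 2⌋ : ℤ)
          + ((n : ℝ) - k) ^ 2 + ((n : ℝ) - k)) →
      (Odd k →
        ((n : ℝ) ^ 2 + n) / 2 - (⌈(k : ℝ) / 2⌉ : ℤ) ≤
          q + ((k : ℝ) * (2 * n - k) - (k : ℝ) * ((k : ℝ) - 1) / 2)
            - (((k : ℝ) - 1) / 2 * (2 * n - 3 * ((k : ℝ) - 1) / 2) + ((n : ℝ) - k + 1)) ∧
        q + ((k : ℝ) * (2 * n - k) - (k : ℝ) * ((k : ℝ) - 1) / 2)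
            - (((k : ℝ) - 1) / 2 * (2 * n - 3 * ((k : ℝ) - 1) / 2) + ((n : ℝ) - k + 1))
          ≤ ((n : ℝ) ^ 2 + n) / 2 - 1) ∧
      (Even k →
        ((n : ℝ) ^ 2 + n) / 2 - (⌈(k : ℝ) / 2⌉ : ℤ) ≤
          q + ((k : ℝ) * (2 * n - k) - (k : ℝ) * ((k : ℝ) - 1) / 2)
            - ((k : ℝ) / 2 * (2 * n - 3 * (k : ℝ) / 2 + 1)) ∧
        q + ((k : ℝ) * (2 * n - k) - (k : ℝ) * ((k : ℝ) - 1) / 2)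
            - ((k : ℝ) / 2 * (2 * n - 3 * (k : ℝ) / 2 + 1))
          ≤ ((n : ℝ) ^ 2 + n) / 2 - 1) := by
  intro q hq1 hq2
  rcases Nat.even_or_odd k with he | ho
  · obtain ⟨m, hm⟩ := he
    have hk : (k : ℝ) = 2 * m := by rw [hm]; push_cast; ring
    have hfl : ⌊(k : ℝ) / 2⌋ = (m : ℤ) := by
      rw [hk]; rw [Int.floor_eq_iff]; push_cast; constructor <;> linarith
    have hce : ⌈(k : ℝ) / 2⌉ = (m : ℤ) := by
      rw [hk]; rw [Int.ceil_eq_iff]; push_cast; constructor <;> linarith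
    rw [hfl] at hq1 hq2
    refine ⟨fun ho => absurd (⟨m, hm⟩ : Even k) (Nat.not_even_iff_odd.mpr ho), fun _ => ?_⟩
    rw [hce]
    constructor <;> push_cast [hk] at hq1 hq2 ⊢ <;> nlinarith [sq_nonneg ((n:ℝ) - k)]
  · obtain ⟨m, hm⟩ := ho
    have hk : (k : ℝ) = 2 * m + 1 := by rw [hm]; push_cast; ring
    have hfl : ⌊(k : ℝ) / 2⌋ = (m : ℤ) := by
      rw [hk]; rw [Int.floor_eq_iff]; push_cast; constructor <;> linarith
    have hce : ⌈(k : ℝ) / 2⌉ = (m : ℤ) + 1 := by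
      rw [hk]; rw [Int.ceil_eq_iff]; push_cast; constructor <;> linarith
    rw [hfl] at hq1 hq2
    refine ⟨fun _ => ?_, fun he => absurd he (Nat.not_even_iff_odd.mpr ⟨m, hm⟩)⟩
    rw [hce]
    constructor <;> push_cast [hk] at hq1 hq2 ⊢ <;> nlinarith [sq_nonneg ((n:ℝ) - k)]

end
end
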